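/- Let σ ∈ S_k and τ ∈ S_ℓ. Then the set {γ ∈ S_{k+ℓ} : γ ∈ σ′ ⧢ τ′[k] for some σ′ Bell congruent to σ and some τ′ Bell congruent to τ} is a union of Bell congruence classes of S_{k+ℓ}. -/

import Mathlib

/-!
A word lies in `σ' ⧢ τ'[k]` exactly when its restriction to the letters `≤ k` is `σ'` and its
restriction to the letters `> k` is `τ'[k]`. Restricting both sides of a Bell rewriting to an
interval of letters gives either equal words or again a Bell rewriting, and shifting all
letters down by `k` preserves Bell rewritings. Hence if `γ ≡ γ'`, the two restrictions of `γ'` are Bell congruent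
to those of `γ`, and `γ'` is a shuffle of them.
-/

/-- The shuffle product of two words, as a multiset of words. -/
def sh {α : Type*} : List α → List α → Multiset (List α)
  | [], v => {v}
  | u, [] => {u}
  | a :: u, b :: v => ((sh u (b :: v)).map (a :: ·)) + ((sh (a :: u) v).map (b :: ·))
termination_by u v => u.length + v.length
decreasing_by all_goals (simp [List.length_cons]; try omega)

/-- One Bell rewriting: `x·b·u·c·a·y ↦ x·b·u·a·c·y` where `a < b < c` and all letters
of `u` are smaller than `b`. -/
def BellStep (w w' : List ℕ) : Prop :=
  ∃ (x y u : List ℕ) (a b c : ℕ), a < b ∧ b < c ∧ (∀ z ∈ u, z < b) ∧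
    w = x ++ b :: u ++ c :: a :: y ∧ w' = x ++ b :: u ++ a :: c :: y

/-- The Bell congruence: the equivalence relation generated by Bell rewritings. -/
def BellCongr : List ℕ → List ℕ → Prop := Relation.EqvGen BellStep

section Shuffle

variable {α : Type*}

theorem sh_nil_left (v : List α) : sh [] v = {v} := by simp [sh]

theorem sh_nil_right (u : List α) : sh u [] = {u} := by cases u <;> simp [sh]

theorem sh_cons_cons (a b : α) (u v : List α) :
    sh (a :: u) (b :: v) = (sh u (b :: v)).map (a :: ·) + (sh (a :: u) v).map (b :: ·) := by
  simp [sh]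

theorem cons_mem_sh_left {u v w : List α} (a : α) (h : w ∈ sh u v) : a :: w ∈ sh (a :: u) v := by
  cases v with
  | nil => simp_all [sh_nil_right]
  | cons b v => simp [sh_cons_cons, h]

theorem cons_mem_sh_right {u v w : List α} (b : α) (h : w ∈ sh u v) : b :: w ∈ sh u (b :: v) := by
  cases u with
  | nil => simp_all [sh_nil_left]
  | cons a u => simp [sh_cons_cons, h]

theorem filter_mem_sh (p : α → Bool) (w : List α) :
    w ∈ sh (w.filter p) (w.filter (!p ·)) := by
  induction w with
  | nil => simp [sh_nil_left]
  | cons z w ih =>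
    cases hz : p z
    · simpa [List.filter_cons, hz] using cons_mem_sh_right z ih
    · simpa [List.filter_cons, hz] using cons_mem_sh_left z ih

theorem filter_eq_of_mem_sh (p : α → Bool) {u v w : List α} (hu : ∀ z ∈ u, p z)
    (hv : ∀ z ∈ v, !p z) (hw : w ∈ sh u v) :
    w.filter p = u ∧ w.filter (!p ·) = v := by
  induction u, v using sh.induct generalizing w with
  | case1 v =>
    obtain rfl : w = v := by simpa [sh_nil_left] using hw
    simp_all
  | case2 u _ =>
    obtain rfl : w = u := by simpa [sh_nil_right] using hw
    simp_all
  | case3 a u b v ih₁ ih₂ =>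
    have ha : p a := hu a (by simp)
    have hb : p b = false := by simpa using hv b (by simp)
    rw [sh_cons_cons, Multiset.mem_add, Multiset.mem_map, Multiset.mem_map] at hw
    rcases hw with ⟨w, hw, rfl⟩ | ⟨w, hw, rfl⟩
    · simp [ha, ih₁ (fun z hz => hu z (by simp [hz])) hv hw]
    · simp [hb, ih₂ hu (fun z hz => hv z (by simp [hz])) hw]

end Shuffle

namespace BellStep

variable {w w' : List ℕ}

theorem perm (h : BellStep w w') : w.Perm w' := by
  obtain ⟨x, y, u, a, b, c, -, -, -, rfl, rfl⟩ := h
  simpa using ((List.Perm.swap a c y).append_left (b :: u)).append_left x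

theorem map {f : ℕ → ℕ} {s : Set ℕ} (hf : StrictMonoOn f s) (hw : ∀ z ∈ w, z ∈ s)
    (h : BellStep w w') : BellStep (w.map f) (w'.map f) := by
  obtain ⟨x, y, u, a, b, c, hab, hbc, hu, rfl, rfl⟩ := h
  have hs : ∀ z ∈ x ++ b :: u ++ c :: a :: y, z ∈ s := hw
  simp only [List.mem_append, List.mem_cons] at hs
  refine ⟨x.map f, y.map f, u.map f, f a, f b, f c, hf (by simp [hs]) (by simp [hs]) hab,
    hf (by simp [hs]) (by simp [hs]) hbc, ?_, by simp, by simp⟩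
  simp only [List.mem_map, forall_exists_index, and_imp, forall_apply_eq_imp_iff₂]
  exact fun z hz => hf (by simp [hs, hz]) (by simp [hs]) (hu z hz)

/-- If `a` or `c` is filtered out, the swap becomes invisible; otherwise `b` survives by
order-convexity. -/
theorem filter {p : ℕ → Bool} (hp : {z | p z}.OrdConnected) (h : BellStep w w') :
    w.filter p = w'.filter p ∨ BellStep (w.filter p) (w'.filter p) := by
  obtain ⟨x, y, u, a, b, c, hab, hbc, hu, rfl, rfl⟩ := h
  by_cases hac : p a ∧ p c
  · have hb : p b := hp.out hac.1 hac.2 ⟨hab.le, hbc.le⟩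
    refine .inr ⟨x.filter p, y.filter p, u.filter p, a, b, c, hab, hbc,
      fun z hz => hu z (List.mem_of_mem_filter hz), ?_, ?_⟩ <;>
      simp [hac.1, hac.2, hb]
  · refine .inl ?_
    rcases not_and_or.1 hac with ha | hc
    · simp [List.filter_cons, ha]
    · simp [List.filter_cons, hc]

end BellStep

namespace BellCongr

variable {w w' : List ℕ}

theorem perm (h : BellCongr w w') : w.Perm w' := by
  induction h with
  | rel _ _ h => exact h.perm
  | refl => rfl
  | symm _ _ _ ih => exact ih.symm
  | trans _ _ _ _ _ ih₁ ih₂ => exact ih₁.trans ih₂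

theorem trans {w'' : List ℕ} (h : BellCongr w w') (h' : BellCongr w' w'') : BellCongr w w'' :=
  Relation.EqvGen.trans _ _ _ h h'

theorem filter {p : ℕ → Bool} (hp : {z | p z}.OrdConnected) (h : BellCongr w w') :
    BellCongr (w.filter p) (w'.filter p) := by
  induction h with
  | rel _ _ h =>
    rcases h.filter hp with h | h
    · rw [h]; exact .refl _
    · exact .rel _ _ h
  | refl => exact .refl _
  | symm _ _ _ ih => exact .symm _ _ ih
  | trans _ _ _ _ _ ih₁ ih₂ => exact ih₁.trans ih₂

theorem map {f : ℕ → ℕ} {s : Set ℕ} (hf : StrictMonoOn f s) (h : BellCongr w w')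
    (hw : ∀ z ∈ w, z ∈ s) : BellCongr (w.map f) (w'.map f) := by
  induction h with
  | rel _ _ h => exact .rel _ _ (h.map hf hw)
  | refl => exact .refl _
  | symm _ _ h ih => exact .symm _ _ (ih fun z hz => hw z ((perm h).mem_iff.1 hz))
  | trans _ _ _ h _ ih₁ ih₂ => exact (ih₁ hw).trans (ih₂ fun z hz => hw z ((perm h).mem_iff.2 hz))

theorem mem_Icc_of_perm_range {k : ℕ} {σ σ' : List ℕ}
    (hσ : σ.Perm ((List.range k).map (· + 1))) (h : BellCongr σ σ') {z : ℕ} (hz : z ∈ σ') :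
    z ∈ Set.Icc 1 k := by
  obtain ⟨i, hi, rfl⟩ := List.mem_map.1 (hσ.mem_iff.1 (h.perm.mem_iff.2 hz))
  simp only [List.mem_range] at hi
  exact ⟨by omega, by omega⟩

end BellCongr

/-- For `σ ∈ S_k` and `τ ∈ S_ℓ`, the union over the Bell classes of `σ` and `τ` of the
shifted shuffles `σ' ⧢ τ'[k]` is a union of Bell congruence classes of `S_{k+ℓ}`,
i.e. it is closed under the Bell congruence. -/
theorem shifted_shuffle_of_bell_classes_is_union_of_classes
    (k l : ℕ) (σ τ : List ℕ)
    (hσ : σ.Perm ((List.range k).map (· + 1)))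
    (hτ : τ.Perm ((List.range l).map (· + 1)))
    (γ γ' : List ℕ)
    (hγ : ∃ σ' τ' : List ℕ, BellCongr σ σ' ∧ BellCongr τ τ' ∧
      γ ∈ sh σ' (τ'.map (· + k)))
    (hcong : BellCongr γ γ') :
    ∃ σ' τ' : List ℕ, BellCongr σ σ' ∧ BellCongr τ τ' ∧
      γ' ∈ sh σ' (τ'.map (· + k)) := by
  obtain ⟨σ₀, τ₀, hσσ₀, hττ₀, hγ⟩ := hγ
  let p : ℕ → Bool := fun z => z ≤ k
  have hlow : {z | p z} = Set.Iic k := by ext; simp [p]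
  have hhigh : {z | !p z} = Set.Ioi k := by ext; simp [p]
  obtain ⟨hσ₀, hτ₀⟩ := filter_eq_of_mem_sh p
    (fun z hz => by simpa [p] using (hσσ₀.mem_Icc_of_perm_range hσ hz).2)
    (fun z hz => by
      obtain ⟨t, ht, rfl⟩ := List.mem_map.1 hz
      have ht₁ := (hττ₀.mem_Icc_of_perm_range hτ ht).1
      simp [p]; omega) hγ
  have hsub : StrictMonoOn (· - k) {z | !p z} :=
    hhigh ▸ fun _ ha _ _ hab => Nat.sub_lt_sub_right (le_of_lt ha) hab
  refine ⟨γ'.filter p, (γ'.filter (!p ·)).map (· - k),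
    hσσ₀.trans (hσ₀ ▸ hcong.filter (hlow ▸ Set.ordConnected_Iic)), ?_, ?_⟩
  · have hshift := (hcong.filter (hhigh ▸ Set.ordConnected_Ioi)).map hsub
      (fun z hz => (List.mem_filter.1 hz).2)
    rw [hτ₀, List.map_map, show (· - k) ∘ (· + k) = id by funext; simp, List.map_id] at hshift
    exact hττ₀.trans hshift
  · convert filter_mem_sh p γ'
    rw [List.map_map]
    refine (List.map_congr_left fun z hz => ?_).trans (List.map_id _)
    have hkz : k < z := by simpa [p] using (List.mem_filter.1 hz).2
    simp only [Function.comp_apply, id_eq]; omega
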